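/- arXiv:1507.01454 — 5 statements merged into one kernel-verified Lean document; each statement's English description precedes it below -/
import Mathlib

section
/- Let m ≤ M be real numbers and let φ : ℝ → ℝ be a nonnegative measurable function with ∫_0^∞ φ(t) dt < ∞. Let X and Y be finite multisets of points (b,d) in EReal × EReal such that every point (b,d) of X or Y satisfies (b = −∞ or m ≤ b ≤ M) and (d = +∞ or m ≤ d ≤ M). Suppose that the number of points of X with b = −∞ equals the number of points of Y with b = −∞, the number of points of X with d = +∞ equals the number of points of Y with d = +∞, and the number of points of X with both b = −∞ and d = +∞ equals the corresponding number for Y. Then the weighted squared distance ∫_{{(x,y) ∈ ℝ² : x < y}} (f_X(x,y) − f_Y(x,y))² φ(y−x) d(x,y) is finite. -/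
open MeasureTheory Set ENNReal

/-- The rank function of a persistence diagram given as a finite multiset of
points `(b, d)` in the extended real plane: `rankFn D x y` is the number of
points `(b, d)` of `D`, counted with multiplicity, with `b ≤ x` and `y ≤ d`. -/
noncomputable def rankFn (D : Multiset (EReal × EReal)) (x y : ℝ) : ℝ :=
  (D.filter fun p => p.1 ≤ (x : EReal) ∧ (y : EReal) ≤ p.2).card


lemma lint_shift (f : ℝ → ℝ≥0∞) (x : ℝ) :
    ∫⁻ y in Set.Ioi x, f (y - x) = ∫⁻ t in Set.Ioi (0:ℝ), f t := by
  rw [← lintegral_indicator measurableSet_Ioi, ← lintegral_indicator measurableSet_Ioi,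
    ← lintegral_add_right_eq_self ((Set.Ioi x).indicator fun y => f (y - x)) x]
  congr 1; funext t
  simp only [Set.indicator_apply, Set.mem_Ioi, lt_add_iff_pos_left, add_sub_cancel_right]

lemma lint_shift' (f : ℝ → ℝ≥0∞) (hf : Measurable f) (y : ℝ) :
    ∫⁻ x in Set.Iio y, f (y - x) = ∫⁻ t in Set.Ioi (0:ℝ), f t := by
  rw [← lintegral_indicator measurableSet_Iio, ← lintegral_indicator measurableSet_Ioi]
  have hmp : MeasurePreserving (fun x : ℝ => y - x) volume volume :=
    Measure.measurePreserving_sub_left volume y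
  have hF : Measurable ((Set.Iio y).indicator fun x => f (y - x)) :=
    (hf.comp (measurable_const.sub measurable_id)).indicator measurableSet_Iio
  calc ∫⁻ a, (Set.Iio y).indicator (fun x => f (y - x)) a
      = ∫⁻ a, (Set.Iio y).indicator (fun x => f (y - x)) a
        ∂(Measure.map (fun x : ℝ => y - x) volume) := by rw [hmp.map_eq]
    _ = ∫⁻ t, (Set.Iio y).indicator (fun x => f (y - x)) (y - t) :=
        lintegral_map hF (measurable_const.sub measurable_id)
    _ = ∫⁻ t, (Set.Ioi (0:ℝ)).indicator f t := by
        congr 1; funext t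
        simp only [Set.indicator_apply, Set.mem_Iio, Set.mem_Ioi, sub_lt_self_iff,
          sub_sub_cancel]
        by_cases ht : 0 < t <;> simp [ht]


lemma rank_eq (m M : ℝ) (hmM : m ≤ M)
    (X Y : Multiset (EReal × EReal))
    (hX : ∀ p ∈ X, (p.1 = ⊥ ∨ ((m : EReal) ≤ p.1 ∧ p.1 ≤ (M : EReal))) ∧
      (p.2 = ⊤ ∨ ((m : EReal) ≤ p.2 ∧ p.2 ≤ (M : EReal))))
    (hY : ∀ p ∈ Y, (p.1 = ⊥ ∨ ((m : EReal) ≤ p.1 ∧ p.1 ≤ (M : EReal))) ∧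
      (p.2 = ⊤ ∨ ((m : EReal) ≤ p.2 ∧ p.2 ≤ (M : EReal))))
    (hbot : (X.filter fun p => p.1 = ⊥).card = (Y.filter fun p => p.1 = ⊥).card)
    (htop : (X.filter fun p => p.2 = ⊤).card = (Y.filter fun p => p.2 = ⊤).card)
    (hboth : (X.filter fun p => p.1 = ⊥ ∧ p.2 = ⊤).card
      = (Y.filter fun p => p.1 = ⊥ ∧ p.2 = ⊤).card)
    (x y : ℝ) (hxy : x < y) (hx : x ∉ Set.Icc m M) (hy : y ∉ Set.Icc m M) :
    rankFn X x y = rankFn Y x y := by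
  simp only [Set.mem_Icc, not_and_or, not_le] at hx hy
  -- basic iff facts
  have bot_iff : ∀ (p : EReal × EReal), (p.1 = ⊥ ∨ ((m : EReal) ≤ p.1 ∧ p.1 ≤ (M : EReal))) →
      x < m → (p.1 ≤ (x : EReal) ↔ p.1 = ⊥) := by
    intro p hb hxm
    constructor
    · intro hle
      rcases hb with h | ⟨h1, _⟩
      · exact h
      · exact absurd (h1.trans hle) (not_le.mpr (EReal.coe_lt_coe_iff.mpr hxm))
    · intro h; rw [h]; exact bot_le
  have b_all : ∀ (p : EReal × EReal), (p.1 = ⊥ ∨ ((m : EReal) ≤ p.1 ∧ p.1 ≤ (M : EReal))) →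
      M < x → p.1 ≤ (x : EReal) := by
    intro p hb hMx
    rcases hb with h | ⟨_, h2⟩
    · rw [h]; exact bot_le
    · exact h2.trans (le_of_lt (EReal.coe_lt_coe_iff.mpr hMx))
  have top_iff : ∀ (p : EReal × EReal), (p.2 = ⊤ ∨ ((m : EReal) ≤ p.2 ∧ p.2 ≤ (M : EReal))) →
      M < y → ((y : EReal) ≤ p.2 ↔ p.2 = ⊤) := by
    intro p hd hMy
    constructor
    · intro hle
      rcases hd with h | ⟨_, h2⟩
      · exact h
      · exact absurd (hle.trans h2) (not_le.mpr (EReal.coe_lt_coe_iff.mpr hMy))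
    · intro h; rw [h]; exact le_top
  have d_all : ∀ (p : EReal × EReal), (p.2 = ⊤ ∨ ((m : EReal) ≤ p.2 ∧ p.2 ≤ (M : EReal))) →
      y < m → (y : EReal) ≤ p.2 := by
    intro p hd hym
    rcases hd with h | ⟨h1, _⟩
    · rw [h]; exact le_top
    · exact (le_of_lt (EReal.coe_lt_coe_iff.mpr hym)).trans h1
  unfold rankFn
  rcases hx with hxm | hMx
  · rcases hy with hym | hMy
    · have eX : (X.filter fun p => p.1 ≤ (x : EReal) ∧ (y : EReal) ≤ p.2)
          = X.filter (fun p => p.1 = ⊥) :=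
        Multiset.filter_congr (fun p hp =>
          (and_iff_left_of_imp (fun _ => d_all p (hX p hp).2 hym)).trans
            (bot_iff p (hX p hp).1 hxm))
      have eY : (Y.filter fun p => p.1 ≤ (x : EReal) ∧ (y : EReal) ≤ p.2)
          = Y.filter (fun p => p.1 = ⊥) :=
        Multiset.filter_congr (fun p hp =>
          (and_iff_left_of_imp (fun _ => d_all p (hY p hp).2 hym)).trans
            (bot_iff p (hY p hp).1 hxm))
      rw [eX, eY, hbot]
    · have eX : (X.filter fun p => p.1 ≤ (x : EReal) ∧ (y : EReal) ≤ p.2)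
          = X.filter (fun p => p.1 = ⊥ ∧ p.2 = ⊤) :=
        Multiset.filter_congr (fun p hp =>
          and_congr (bot_iff p (hX p hp).1 hxm) (top_iff p (hX p hp).2 hMy))
      have eY : (Y.filter fun p => p.1 ≤ (x : EReal) ∧ (y : EReal) ≤ p.2)
          = Y.filter (fun p => p.1 = ⊥ ∧ p.2 = ⊤) :=
        Multiset.filter_congr (fun p hp =>
          and_congr (bot_iff p (hY p hp).1 hxm) (top_iff p (hY p hp).2 hMy))
      rw [eX, eY, hboth]
  · have hMy : M < y := hMx.trans hxy
    have eX : (X.filter fun p => p.1 ≤ (x : EReal) ∧ (y : EReal) ≤ p.2)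
        = X.filter (fun p => p.2 = ⊤) :=
      Multiset.filter_congr (fun p hp =>
        (and_iff_right_of_imp (fun _ => b_all p (hX p hp).1 hMx)).trans
          (top_iff p (hX p hp).2 hMy))
    have eY : (Y.filter fun p => p.1 ≤ (x : EReal) ∧ (y : EReal) ≤ p.2)
        = Y.filter (fun p => p.2 = ⊤) :=
      Multiset.filter_congr (fun p hp =>
        (and_iff_right_of_imp (fun _ => b_all p (hY p hp).1 hMx)).trans
          (top_iff p (hY p hp).2 hMy))
    rw [eX, eY, htop]

theorem finite_weighted_sq_distance_of_rank_functions
    (m M : ℝ) (hmM : m ≤ M)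
    (φ : ℝ → ℝ) (hφ0 : ∀ t, 0 ≤ φ t) (hφm : Measurable φ)
    (hφint : ∫⁻ t in Set.Ioi (0 : ℝ), ENNReal.ofReal (φ t) < ⊤)
    (X Y : Multiset (EReal × EReal))
    (hX : ∀ p ∈ X, (p.1 = ⊥ ∨ ((m : EReal) ≤ p.1 ∧ p.1 ≤ (M : EReal))) ∧
      (p.2 = ⊤ ∨ ((m : EReal) ≤ p.2 ∧ p.2 ≤ (M : EReal))))
    (hY : ∀ p ∈ Y, (p.1 = ⊥ ∨ ((m : EReal) ≤ p.1 ∧ p.1 ≤ (M : EReal))) ∧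
      (p.2 = ⊤ ∨ ((m : EReal) ≤ p.2 ∧ p.2 ≤ (M : EReal))))
    (hbot : (X.filter fun p => p.1 = ⊥).card = (Y.filter fun p => p.1 = ⊥).card)
    (htop : (X.filter fun p => p.2 = ⊤).card = (Y.filter fun p => p.2 = ⊤).card)
    (hboth : (X.filter fun p => p.1 = ⊥ ∧ p.2 = ⊤).card
      = (Y.filter fun p => p.1 = ⊥ ∧ p.2 = ⊤).card) :
    ∫⁻ p in {q : ℝ × ℝ | q.1 < q.2},
      ENNReal.ofReal ((rankFn X p.1 p.2 - rankFn Y p.1 p.2) ^ 2 * φ (p.2 - p.1)) < ⊤ := by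
  classical
  set s : Set (ℝ × ℝ) := {q : ℝ × ℝ | q.1 < q.2} with hs_def
  have hs : MeasurableSet s := measurableSet_lt measurable_fst measurable_snd
  set I : ℝ≥0∞ := ∫⁻ t in Set.Ioi (0 : ℝ), ENNReal.ofReal (φ t) with hI_def
  set C : ℝ := (Multiset.card X : ℝ) + (Multiset.card Y : ℝ) with hC_def
  have hC0 : (0 : ℝ) ≤ C := by positivity
  set c : ℝ≥0∞ := ENNReal.ofReal (C ^ 2) with hc_def
  set g : ℝ × ℝ → ℝ≥0∞ := fun p => ENNReal.ofReal (φ (p.2 - p.1)) with hg_def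
  have hg : Measurable g := (hφm.comp (measurable_snd.sub measurable_fst)).ennreal_ofReal
  set B1 : Set (ℝ × ℝ) := Set.Icc m M ×ˢ (Set.univ : Set ℝ) with hB1_def
  set B2 : Set (ℝ × ℝ) := (Set.univ : Set ℝ) ×ˢ Set.Icc m M with hB2_def
  have hB1 : MeasurableSet B1 := measurableSet_Icc.prod MeasurableSet.univ
  have hB2 : MeasurableSet B2 := MeasurableSet.univ.prod measurableSet_Icc
  -- pointwise bound
  have hbound : ∀ p ∈ s,
      ENNReal.ofReal ((rankFn X p.1 p.2 - rankFn Y p.1 p.2) ^ 2 * φ (p.2 - p.1))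
        ≤ (B1 ∪ B2).indicator (fun p => c * g p) p := by
    intro p hp
    by_cases hpB : p ∈ B1 ∪ B2
    · rw [Set.indicator_of_mem hpB]
      have h1 : rankFn X p.1 p.2 ≤ (Multiset.card X : ℝ) := by
        unfold rankFn; exact_mod_cast Multiset.card_le_card (Multiset.filter_le _ _)
      have h2 : rankFn Y p.1 p.2 ≤ (Multiset.card Y : ℝ) := by
        unfold rankFn; exact_mod_cast Multiset.card_le_card (Multiset.filter_le _ _)
      have h3 : (0 : ℝ) ≤ rankFn X p.1 p.2 := by unfold rankFn; positivity
      have h4 : (0 : ℝ) ≤ rankFn Y p.1 p.2 := by unfold rankFn; positivity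
      have hsq : (rankFn X p.1 p.2 - rankFn Y p.1 p.2) ^ 2 ≤ C ^ 2 := by
        apply sq_le_sq'
        · nlinarith
        · nlinarith
      calc ENNReal.ofReal ((rankFn X p.1 p.2 - rankFn Y p.1 p.2) ^ 2 * φ (p.2 - p.1))
          ≤ ENNReal.ofReal (C ^ 2 * φ (p.2 - p.1)) :=
            ENNReal.ofReal_le_ofReal (mul_le_mul_of_nonneg_right hsq (hφ0 _))
        _ = c * g p := ENNReal.ofReal_mul (by positivity)
    · rw [Set.indicator_of_notMem hpB]
      have hpx : p.1 ∉ Set.Icc m M := fun h => hpB (Or.inl ⟨h, trivial⟩)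
      have hpy : p.2 ∉ Set.Icc m M := fun h => hpB (Or.inr ⟨trivial, h⟩)
      rw [rank_eq m M hmM X Y hX hY hbot htop hboth p.1 p.2 hp hpx hpy]
      simp
  -- integral over band 1
  have hJ1 : ∫⁻ p in B1 ∩ s, g p = I * ENNReal.ofReal (M - m) := by
    rw [← lintegral_indicator (hB1.inter hs)]
    rw [Measure.volume_eq_prod]
    rw [lintegral_prod _ ((hg.indicator (hB1.inter hs)).aemeasurable)]
    have hinner : ∀ x : ℝ, (∫⁻ y, ((B1 ∩ s).indicator g) (x, y))
        = (Set.Icc m M).indicator (fun _ => I) x := by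
      intro x
      by_cases hx : x ∈ Set.Icc m M
      · rw [Set.indicator_of_mem hx]
        have e : ∀ y : ℝ, ((B1 ∩ s).indicator g) (x, y)
            = (Set.Ioi x).indicator (fun y => ENNReal.ofReal (φ (y - x))) y := by
          intro y
          by_cases hy : x < y
          · have h1 : (x, y) ∈ B1 ∩ s := ⟨⟨hx, trivial⟩, hy⟩
            have h2 : y ∈ Set.Ioi x := hy
            rw [Set.indicator_of_mem h1, Set.indicator_of_mem h2]
          · have h1 : (x, y) ∉ B1 ∩ s := fun h => hy h.2
            have h2 : y ∉ Set.Ioi x := hy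
            rw [Set.indicator_of_notMem h1, Set.indicator_of_notMem h2]
        simp_rw [e]
        rw [lintegral_indicator measurableSet_Ioi]
        exact lint_shift (fun t => ENNReal.ofReal (φ t)) x
      · rw [Set.indicator_of_notMem hx]
        have e : ∀ y : ℝ, ((B1 ∩ s).indicator g) (x, y) = 0 := by
          intro y
          exact Set.indicator_of_notMem (fun h => hx h.1.1) _
        simp_rw [e]
        simp
    simp_rw [hinner]
    rw [lintegral_indicator_const measurableSet_Icc I, Real.volume_Icc]
  -- integral over band 2
  have hJ2 : ∫⁻ p in B2 ∩ s, g p = I * ENNReal.ofReal (M - m) := by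
    rw [← lintegral_indicator (hB2.inter hs)]
    rw [Measure.volume_eq_prod]
    rw [lintegral_prod_symm _ ((hg.indicator (hB2.inter hs)).aemeasurable)]
    have hinner : ∀ y : ℝ, (∫⁻ x, ((B2 ∩ s).indicator g) (x, y))
        = (Set.Icc m M).indicator (fun _ => I) y := by
      intro y
      by_cases hy : y ∈ Set.Icc m M
      · rw [Set.indicator_of_mem hy]
        have e : ∀ x : ℝ, ((B2 ∩ s).indicator g) (x, y)
            = (Set.Iio y).indicator (fun x => ENNReal.ofReal (φ (y - x))) x := by
          intro x
          by_cases hx : x < y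
          · have h1 : (x, y) ∈ B2 ∩ s := ⟨⟨trivial, hy⟩, hx⟩
            have h2 : x ∈ Set.Iio y := hx
            rw [Set.indicator_of_mem h1, Set.indicator_of_mem h2]
          · have h1 : (x, y) ∉ B2 ∩ s := fun h => hx h.2
            have h2 : x ∉ Set.Iio y := hx
            rw [Set.indicator_of_notMem h1, Set.indicator_of_notMem h2]
        simp_rw [e]
        rw [lintegral_indicator measurableSet_Iio]
        exact lint_shift' (fun t => ENNReal.ofReal (φ t)) hφm.ennreal_ofReal y
      · rw [Set.indicator_of_notMem hy]
        have e : ∀ x : ℝ, ((B2 ∩ s).indicator g) (x, y) = 0 := by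
          intro x
          exact Set.indicator_of_notMem (fun h => hy h.1.2) _
        simp_rw [e]
        simp
    simp_rw [hinner]
    rw [lintegral_indicator_const measurableSet_Icc I, Real.volume_Icc]
  have hIfin : I * ENNReal.ofReal (M - m) < ⊤ :=
    ENNReal.mul_lt_top hφint ENNReal.ofReal_lt_top
  -- assemble
  calc ∫⁻ p in s, ENNReal.ofReal ((rankFn X p.1 p.2 - rankFn Y p.1 p.2) ^ 2 * φ (p.2 - p.1))
      ≤ ∫⁻ p in s, (B1 ∪ B2).indicator (fun p => c * g p) p :=
        setLIntegral_mono' hs hbound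
    _ = ∫⁻ p in (B1 ∪ B2) ∩ s, c * g p := by
        rw [lintegral_indicator (hB1.union hB2), Measure.restrict_restrict (hB1.union hB2)]
    _ = ∫⁻ p in (B1 ∩ s) ∪ (B2 ∩ s), c * g p := by
        rw [Set.union_inter_distrib_right]
    _ ≤ (∫⁻ p in B1 ∩ s, c * g p) + ∫⁻ p in B2 ∩ s, c * g p :=
        lintegral_union_le _ _ _
    _ = c * (I * ENNReal.ofReal (M - m)) + c * (I * ENNReal.ofReal (M - m)) := by
        rw [lintegral_const_mul c hg, lintegral_const_mul c hg, hJ1, hJ2]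
    _ < ⊤ := by
        have : c < ⊤ := ENNReal.ofReal_lt_top
        exact ENNReal.add_lt_top.mpr ⟨ENNReal.mul_lt_top this hIfin,
          ENNReal.mul_lt_top this hIfin⟩
end

section
/- Let m ≤ M and N ≥ 0 be real numbers, let φ : ℝ → ℝ be a nonnegative measurable function with ∫_0^∞ φ(t) dt < ∞, and let f, g : ℝ × ℝ → ℝ be measurable functions with |f(x,y)| ≤ N and |g(x,y)| ≤ N for all (x,y). Suppose that f(x,y) = g(x,y) for every (x,y) with x < y such that x ∉ [m,M] and y ∉ [m,M] (i.e., f and g agree off the band ([m,M] × ℝ) ∪ (ℝ × [m,M])). Then ∫_{{(x,y) ∈ ℝ² : x < y}} (f(x,y) − g(x,y))² φ(y−x) d(x,y) < ∞. -/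
/-!
On `{x < y}` the integrand vanishes off the band where `x` or `y` lies in `[m, M]`, and is at most
`(2N)² φ(y - x)` on it. Bounding the integral over each half of the band by an iterated integral
and translating the inner variable, each half contributes at most `(M - m) ∫₀^∞ φ`.
-/

open MeasureTheory ENNReal Set

section HalfLine

variable (ψ : ℝ → ℝ≥0∞)

theorem setLIntegral_Ioi_comp_sub_right (a : ℝ) :
    ∫⁻ y in Ioi a, ψ (y - a) = ∫⁻ t in Ioi 0, ψ t := by
  rw [← lintegral_indicator measurableSet_Ioi, ← lintegral_indicator measurableSet_Ioi,
    ← lintegral_sub_right_eq_self ((Ioi 0).indicator ψ) a]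
  congr with y
  simp [indicator, sub_pos]

theorem setLIntegral_Iio_comp_sub_left (a : ℝ) :
    ∫⁻ x in Iio a, ψ (a - x) = ∫⁻ t in Ioi 0, ψ t := by
  rw [← lintegral_indicator measurableSet_Iio, ← lintegral_indicator measurableSet_Ioi,
    ← lintegral_sub_left_eq_self ((Ioi 0).indicator ψ) a]
  congr with x
  simp [indicator, sub_pos]

theorem setLIntegral_comp_sub_le_of_fst_mem {I : Set ℝ} (hI : MeasurableSet I) :
    ∫⁻ p in {p : ℝ × ℝ | p.1 < p.2 ∧ p.1 ∈ I}, ψ (p.2 - p.1) ≤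
      volume I * ∫⁻ t in Ioi 0, ψ t := by
  have hS : MeasurableSet {p : ℝ × ℝ | p.1 < p.2 ∧ p.1 ∈ I} :=
    (measurableSet_lt measurable_fst measurable_snd).inter (hI.preimage measurable_fst)
  have inner : ∀ x, ∫⁻ y, {p : ℝ × ℝ | p.1 < p.2 ∧ p.1 ∈ I}.indicator
      (fun p => ψ (p.2 - p.1)) (x, y) = I.indicator (fun _ => ∫⁻ t in Ioi 0, ψ t) x := by
    intro x
    by_cases hx : x ∈ I
    · rw [indicator_of_mem hx, ← setLIntegral_Ioi_comp_sub_right ψ x,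
        ← lintegral_indicator measurableSet_Ioi]
      congr with y
      simp [indicator, hx]
    · simp [indicator, hx]
  rw [← lintegral_indicator hS, Measure.volume_eq_prod]
  refine (lintegral_prod_le _).trans_eq ?_
  rw [lintegral_congr inner, lintegral_indicator_const hI, mul_comm]

theorem setLIntegral_comp_sub_le_of_snd_mem {I : Set ℝ} (hI : MeasurableSet I) :
    ∫⁻ p in {p : ℝ × ℝ | p.1 < p.2 ∧ p.2 ∈ I}, ψ (p.2 - p.1) ≤
      volume I * ∫⁻ t in Ioi 0, ψ t := by
  have hS : MeasurableSet {p : ℝ × ℝ | p.1 < p.2 ∧ p.2 ∈ I} :=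
    (measurableSet_lt measurable_fst measurable_snd).inter (hI.preimage measurable_snd)
  have inner : ∀ y, ∫⁻ x, {p : ℝ × ℝ | p.1 < p.2 ∧ p.2 ∈ I}.indicator
      (fun p => ψ (p.2 - p.1)) (x, y) = I.indicator (fun _ => ∫⁻ t in Ioi 0, ψ t) y := by
    intro y
    by_cases hy : y ∈ I
    · rw [indicator_of_mem hy, ← setLIntegral_Iio_comp_sub_left ψ y,
        ← lintegral_indicator measurableSet_Iio]
      congr with x
      simp [indicator, hy]
    · simp [indicator, hy]
  rw [← lintegral_indicator hS, Measure.volume_eq_prod, ← lintegral_prod_swap]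
  refine (lintegral_prod_le _).trans_eq ?_
  simp only [Prod.swap_prod_mk]
  rw [lintegral_congr inner, lintegral_indicator_const hI, mul_comm]

def upperBand (I : Set ℝ) : Set (ℝ × ℝ) := {p | p.1 < p.2 ∧ (p.1 ∈ I ∨ p.2 ∈ I)}

theorem measurableSet_upperBand {I : Set ℝ} (hI : MeasurableSet I) :
    MeasurableSet (upperBand I) :=
  (measurableSet_lt measurable_fst measurable_snd).inter
    ((hI.preimage measurable_fst).union (hI.preimage measurable_snd))

theorem setLIntegral_upperBand_comp_sub_le {I : Set ℝ} (hI : MeasurableSet I) :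
    ∫⁻ p in upperBand I, ψ (p.2 - p.1) ≤ 2 * (volume I * ∫⁻ t in Ioi 0, ψ t) := by
  have hsplit : upperBand I =
      {p : ℝ × ℝ | p.1 < p.2 ∧ p.1 ∈ I} ∪ {p : ℝ × ℝ | p.1 < p.2 ∧ p.2 ∈ I} := by
    ext p
    exact and_or_left
  rw [hsplit, two_mul]
  exact (lintegral_union_le _ _ _).trans (add_le_add
    (setLIntegral_comp_sub_le_of_fst_mem ψ hI) (setLIntegral_comp_sub_le_of_snd_mem ψ hI))

end HalfLine

theorem ofReal_sq_sub_mul_le {a b N : ℝ} (c : ℝ) (ha : |a| ≤ N) (hb : |b| ≤ N) :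
    ENNReal.ofReal ((a - b) ^ 2 * c) ≤ ENNReal.ofReal ((2 * N) ^ 2) * ENNReal.ofReal c := by
  rw [ENNReal.ofReal_mul (sq_nonneg _)]
  obtain ⟨ha₁, ha₂⟩ := abs_le.mp ha
  obtain ⟨hb₁, hb₂⟩ := abs_le.mp hb
  exact mul_le_mul_left (ofReal_le_ofReal (sq_le_sq' (by linarith) (by linarith))) _

theorem finite_weighted_sq_distance_of_bounded_band_agreement_general
    (m M N : ℝ)
    (φ : ℝ → ℝ)
    (hφint : ∫⁻ t in Set.Ioi (0 : ℝ), ENNReal.ofReal (φ t) < ⊤)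
    (f g : ℝ × ℝ → ℝ)
    (hfN : ∀ p, |f p| ≤ N) (hgN : ∀ p, |g p| ≤ N)
    (hagree : ∀ p : ℝ × ℝ, p.1 < p.2 → p.1 ∉ Set.Icc m M → p.2 ∉ Set.Icc m M →
      f p = g p) :
    ∫⁻ p in {q : ℝ × ℝ | q.1 < q.2},
      ENNReal.ofReal ((f p - g p) ^ 2 * φ (p.2 - p.1)) < ⊤ := by
  set K := ENNReal.ofReal ((2 * N) ^ 2)
  have hbound : ∀ p ∈ {q : ℝ × ℝ | q.1 < q.2}, ENNReal.ofReal ((f p - g p) ^ 2 * φ (p.2 - p.1))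
      ≤ (upperBand (Icc m M)).indicator (fun p => K * ENNReal.ofReal (φ (p.2 - p.1))) p := by
    intro p (hp : p.1 < p.2)
    by_cases hpI : p.1 ∈ Icc m M ∨ p.2 ∈ Icc m M
    · rw [indicator_of_mem (show p ∈ upperBand (Icc m M) from ⟨hp, hpI⟩)]
      exact ofReal_sq_sub_mul_le _ (hfN p) (hgN p)
    · obtain ⟨h₁, h₂⟩ := not_or.mp hpI
      simp [hagree p hp h₁ h₂]
  calc _ ≤ ∫⁻ p in {q : ℝ × ℝ | q.1 < q.2},
          (upperBand (Icc m M)).indicator (fun p => K * ENNReal.ofReal (φ (p.2 - p.1))) p :=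
        setLIntegral_mono' (measurableSet_lt measurable_fst measurable_snd) hbound
    _ ≤ ∫⁻ p in upperBand (Icc m M), K * ENNReal.ofReal (φ (p.2 - p.1)) := by
        rw [setLIntegral_indicator (measurableSet_upperBand measurableSet_Icc)]
        exact lintegral_mono_set inter_subset_left
    _ ≤ K * (2 * (volume (Icc m M) * ∫⁻ t in Ioi 0, ENNReal.ofReal (φ t))) := by
        rw [lintegral_const_mul' _ _ ofReal_ne_top]
        gcongr
        exact setLIntegral_upperBand_comp_sub_le _ measurableSet_Icc
    _ < ⊤ := by
        rw [Real.volume_Icc]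
        finiteness

theorem finite_weighted_sq_distance_of_bounded_band_agreement
    (m M N : ℝ) (hmM : m ≤ M) (hN : 0 ≤ N)
    (φ : ℝ → ℝ) (hφ0 : ∀ t, 0 ≤ φ t) (hφm : Measurable φ)
    (hφint : ∫⁻ t in Set.Ioi (0 : ℝ), ENNReal.ofReal (φ t) < ⊤)
    (f g : ℝ × ℝ → ℝ) (hf : Measurable f) (hg : Measurable g)
    (hfN : ∀ p, |f p| ≤ N) (hgN : ∀ p, |g p| ≤ N)
    (hagree : ∀ p : ℝ × ℝ, p.1 < p.2 → p.1 ∉ Set.Icc m M → p.2 ∉ Set.Icc m M →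
      f p = g p) :
    ∫⁻ p in {q : ℝ × ℝ | q.1 < q.2},
      ENNReal.ofReal ((f p - g p) ^ 2 * φ (p.2 - p.1)) < ⊤ :=
  finite_weighted_sq_distance_of_bounded_band_agreement_general m M N φ hφint f g hfN hgN hagree
end

section
/- Let X and Y be finite multisets of points (b,d) with b ∈ ℝ and d ∈ ℝ ∪ {+∞}. Suppose that the multiset of first coordinates of the points of X with d = +∞ is not equal (as a multiset of reals) to the multiset of first coordinates of the points of Y with d = +∞ (i.e., the birth values of the essential classes differ). Then the unweighted squared L² distance ∫_{{(x,y) ∈ ℝ² : x < y}} (f_X(x,y) − f_Y(x,y))² d(x,y), taken with respect to Lebesgue measure on the plane, is infinite. -/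
/-!
Once `y` exceeds every finite death, `f_D(x, y)` counts the essential births `≤ x`. A finite
multiset of reals is determined by its cumulative counting function, so the counts for `X` and
`Y` differ at some `a`; being right-continuous step functions, they differ on a whole interval
`[a, b)`. The integrand is then at least `1` on the strip `[a, b) × (M, ∞)`, which has infinite
Lebesgue measure.
-/

open MeasureTheory

/-- The rank function of a persistence diagram given as a finite multiset of
points `(b, d)` with `b` real and `d ∈ ℝ ∪ {+∞}`: `rankFnTop D x y` is the
number of points `(b, d)` of `D`, counted with multiplicity, with `b ≤ x` and
`y ≤ d`. -/
noncomputable def rankFnTop (D : Multiset (ℝ × WithTop ℝ)) (x y : ℝ) : ℝ :=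
  (D.filter fun p => p.1 ≤ x ∧ (y : WithTop ℝ) ≤ p.2).card

open Filter Topology Set

namespace Multiset

variable {α : Type*} [LinearOrder α]

theorem card_filter_le_eq_card_filter_lt_add_count (M : Multiset α) (a : α) :
    (M.filter (· ≤ a)).card = (M.filter (· < a)).card + M.count a := by
  rw [count_eq_card_filter_eq, ← card_add, filter_add_filter,
    filter_eq_nil (p := fun b => b < a ∧ a = b) |>.2 fun b _ h => h.1.ne' h.2, add_zero]
  congr 1
  exact filter_congr fun b _ => le_iff_lt_or_eq.trans (or_congr_right eq_comm)

variable [TopologicalSpace α] [OrderTopology α]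

theorem eventually_filter_le_eq_filter_lt (M : Multiset α) (a : α) :
    ∀ᶠ x in 𝓝[<] a, M.filter (· ≤ x) = M.filter (· < a) := by
  have : ∀ b ∈ M.toFinset, ∀ᶠ x in 𝓝[<] a, (b ≤ x ↔ b < a) := by
    intro b _
    rcases lt_or_ge b a with hba | hab
    · filter_upwards [Ioo_mem_nhdsLT hba] with x hx using iff_of_true hx.1.le hba
    · filter_upwards [self_mem_nhdsWithin] with x (hx : x < a)
      exact iff_of_false (by order) hab.not_gt
  filter_upwards [(eventually_all_finset _).2 this] with x hx
  exact filter_congr fun b hb => hx b (mem_toFinset.2 hb)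

theorem eventually_filter_le_eq_filter_le (M : Multiset α) (a : α) :
    ∀ᶠ x in 𝓝[≥] a, M.filter (· ≤ x) = M.filter (· ≤ a) := by
  have : ∀ b ∈ M.toFinset, ∀ᶠ x in 𝓝[≥] a, (b ≤ x ↔ b ≤ a) := by
    intro b _
    rcases le_or_gt b a with hba | hab
    · filter_upwards [self_mem_nhdsWithin] with x (hx : a ≤ x)
      exact iff_of_true (hba.trans hx) hba
    · filter_upwards [Ico_mem_nhdsGE hab] with x hx using iff_of_false hx.2.not_ge hab.not_ge
  filter_upwards [(eventually_all_finset _).2 this] with x hx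
  exact filter_congr fun b hb => hx b (mem_toFinset.2 hb)

theorem eq_of_card_filter_le_eq [DenselyOrdered α] [NoMinOrder α] {M N : Multiset α}
    (h : ∀ x, (M.filter (· ≤ x)).card = (N.filter (· ≤ x)).card) : M = N := by
  ext a
  obtain ⟨x, hMx, hNx⟩ := ((M.eventually_filter_le_eq_filter_lt a).and
    (N.eventually_filter_le_eq_filter_lt a)).exists
  have hlt : (M.filter (· < a)).card = (N.filter (· < a)).card := by
    rw [← hMx, ← hNx, h x]
  have hle := h a
  rw [card_filter_le_eq_card_filter_lt_add_count,
    card_filter_le_eq_card_filter_lt_add_count] at hle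
  omega

theorem exists_Ico_card_filter_le_ne [DenselyOrdered α] [NoMinOrder α] [NoMaxOrder α]
    {M N : Multiset α} (h : M ≠ N) :
    ∃ a b, a < b ∧ ∀ x ∈ Set.Ico a b, (M.filter (· ≤ x)).card ≠ (N.filter (· ≤ x)).card := by
  obtain ⟨a, ha⟩ : ∃ a, (M.filter (· ≤ a)).card ≠ (N.filter (· ≤ a)).card := by
    contrapose! h
    exact eq_of_card_filter_le_eq h
  obtain ⟨b, hab, hsub⟩ := mem_nhdsGE_iff_exists_Ico_subset.1
    ((M.eventually_filter_le_eq_filter_le a).and (N.eventually_filter_le_eq_filter_le a))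
  refine ⟨a, b, hab, fun x hx => ?_⟩
  obtain ⟨hMx, hNx⟩ := hsub hx
  rwa [hMx, hNx]

end Multiset

noncomputable def essentialBirths (D : Multiset (ℝ × WithTop ℝ)) : Multiset ℝ :=
  (D.filter fun p => p.2 = ⊤).map Prod.fst

theorem eventually_rankFnTop_eq (D : Multiset (ℝ × WithTop ℝ)) :
    ∀ᶠ y in atTop, ∀ x, rankFnTop D x y = ((essentialBirths D).filter (· ≤ x)).card := by
  have : ∀ p ∈ D.toFinset, ∀ᶠ y : ℝ in atTop, ((y : WithTop ℝ) ≤ p.2 ↔ p.2 = ⊤) := by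
    rintro ⟨b, _ | d⟩ _
    · exact Eventually.of_forall fun y => iff_of_true le_top rfl
    · filter_upwards [eventually_gt_atTop d] with y hy
      exact iff_of_false (WithTop.coe_le_coe.not.2 hy.not_ge) WithTop.coe_ne_top
  filter_upwards [(eventually_all_finset _).2 this] with y hy x
  rw [rankFnTop, essentialBirths, Multiset.filter_map, Multiset.card_map, Multiset.filter_filter]
  congr 2
  exact Multiset.filter_congr fun p hp => and_congr_right' (hy p (Multiset.mem_toFinset.2 hp))

theorem one_le_sub_sq_of_ne {m n : ℕ} (h : m ≠ n) : 1 ≤ ((m : ℝ) - n) ^ 2 := by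
  have : (1 : ℤ) ≤ |(m : ℤ) - n| := Int.one_le_abs (sub_ne_zero.2 (by exact_mod_cast h))
  rw [← sq_abs, one_le_sq_iff_one_le_abs, abs_abs]
  exact_mod_cast this

theorem Real.volume_Ico_prod_Ioi {a b : ℝ} (hab : a < b) (c : ℝ) :
    volume (Ico a b ×ˢ Ioi c) = ⊤ := by
  rw [Measure.volume_eq_prod, Measure.prod_prod, Real.volume_Ico, Real.volume_Ioi,
    ENNReal.mul_top (ENNReal.ofReal_pos.2 (sub_pos.2 hab)).ne']

theorem MeasureTheory.setLIntegral_eq_top_of_one_le {α : Type*} [MeasurableSpace α]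
    {μ : Measure α} {s t : Set α} {f : α → ENNReal} (hs : MeasurableSet s) (hst : s ⊆ t)
    (hμs : μ s = ⊤) (hf : ∀ x ∈ s, 1 ≤ f x) : ∫⁻ x in t, f x ∂μ = ⊤ :=
  eq_top_iff.2 <| calc
    ⊤ = ∫⁻ _ in s, 1 ∂μ := by rw [setLIntegral_one, hμs]
    _ ≤ ∫⁻ x in s, f x ∂μ := setLIntegral_mono' hs hf
    _ ≤ ∫⁻ x in t, f x ∂μ := lintegral_mono_set hst

theorem unweighted_sq_distance_infinite_of_essential_births_differ
    (X Y : Multiset (ℝ × WithTop ℝ))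
    (hbirths : (X.filter fun p => p.2 = ⊤).map Prod.fst
      ≠ (Y.filter fun p => p.2 = ⊤).map Prod.fst) :
    ∫⁻ p in {q : ℝ × ℝ | q.1 < q.2},
      ENNReal.ofReal ((rankFnTop X p.1 p.2 - rankFnTop Y p.1 p.2) ^ 2) = ⊤ := by
  obtain ⟨a, b, hab, hcard⟩ := Multiset.exists_Ico_card_filter_le_ne hbirths
  obtain ⟨C, hC⟩ := eventually_atTop.1
    ((eventually_rankFnTop_eq X).and (eventually_rankFnTop_eq Y))
  refine setLIntegral_eq_top_of_one_le (s := Ico a b ×ˢ Ioi (max C b))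
    (measurableSet_Ico.prod measurableSet_Ioi) ?_ (Real.volume_Ico_prod_Ioi hab _) ?_
  · rintro ⟨x, y⟩ ⟨hx, hy⟩
    exact hx.2.trans (le_max_right C b |>.trans_lt hy)
  · rintro ⟨x, y⟩ ⟨hx, hy⟩
    obtain ⟨hX, hY⟩ := hC y (le_max_left C b |>.trans hy.le)
    rw [hX, hY]
    exact ENNReal.one_le_ofReal.2 (one_le_sub_sq_of_ne (hcard x hx))
end

section
/- Let E be a real inner product space, let n ≥ 1, let v : Fin n → E with v j ≠ 0 for some j, and let D be the n × n Gram matrix D(k,l) = ⟪v k, v l⟫, which is Hermitian (symmetric). Then the largest eigenvalue of D is the greatest element of the set {Σ_i ⟪ζ, v i⟫² : ζ ∈ span{v 0, …, v (n−1)}, ‖ζ‖ = 1}; that is, the maximum over unit vectors ζ in the span of the v i of Σ_i ⟪ζ, v i⟫² is attained and equals max_k λ_k where λ_0,…,λ_{n−1} are the eigenvalues of D. -/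
/-!
Write `ζ = ∑ k, c k • v k`. Then the scores are `⟪ζ, v i⟫ = (D c) i` and `‖ζ‖² = c ⬝ D c`.
As `D` is positive semidefinite with spectrum in `[0, μ]`, `μ` the top eigenvalue, the continuous
functional calculus gives `D² ≤ μ D`, i.e. `∑ i, ⟪ζ, v i⟫² ≤ μ ‖ζ‖²`. Equality holds for
`ζ = μ^(-1/2) ∑ k, u k • v k` with `u` a unit eigenvector for `μ`; here `μ > 0` because `D ≠ 0`.
-/

open scoped RealInnerProductSpace

open Matrix

section
variable {A : Type*} [TopologicalSpace A] [Ring A] [StarRing A] [PartialOrder A] [StarOrderedRing A]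
  [Algebra ℝ A] [ContinuousFunctionalCalculus ℝ A IsSelfAdjoint] [NonnegSpectrumClass ℝ A]

lemma mul_self_le_smul_of_spectrum_subset_Icc {a : A} {μ : ℝ} (ha : IsSelfAdjoint a)
    (h : spectrum ℝ a ⊆ Set.Icc 0 μ) : a * a ≤ μ • a := by
  have hsq : a * a = cfc (fun x : ℝ => x * x) a := by rw [cfc_mul _ _ a, cfc_id' ℝ a]
  have hsm : μ • a = cfc (fun x : ℝ => μ * x) a := by rw [cfc_const_mul .., cfc_id' ℝ a]
  rw [hsq, hsm, cfc_le_iff _ _ a]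
  intro x hx
  obtain ⟨h0, hμ⟩ := h hx
  exact mul_le_mul_of_nonneg_right hμ h0

end

namespace Matrix.PosSemidef

variable {n : Type*} [Fintype n] [DecidableEq n] {A : Matrix n n ℝ}

open scoped MatrixOrder in
lemma mul_self_le_smul (hA : A.PosSemidef) {μ : ℝ} (h : ∀ i, hA.1.eigenvalues i ≤ μ) :
    A * A ≤ μ • A := by
  apply mul_self_le_smul_of_spectrum_subset_Icc hA.1
  rw [hA.1.spectrum_real_eq_range_eigenvalues]
  rintro _ ⟨i, rfl⟩
  exact ⟨hA.eigenvalues_nonneg i, h i⟩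

lemma mulVec_dotProduct_mulVec_le (hA : A.PosSemidef) {μ : ℝ}
    (h : ∀ i, hA.1.eigenvalues i ≤ μ) (x : n → ℝ) :
    (A *ᵥ x) ⬝ᵥ (A *ᵥ x) ≤ μ * (x ⬝ᵥ A *ᵥ x) := by
  have hsymm : x ᵥ* A = A *ᵥ x := by
    rw [← mulVec_transpose, ← conjTranspose_eq_transpose_of_trivial, hA.1.eq]
  have := (hA.mul_self_le_smul h).dotProduct_mulVec_nonneg x
  rw [star_trivial, sub_mulVec, smul_mulVec, ← mulVec_mulVec, dotProduct_sub, dotProduct_smul,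
    dotProduct_mulVec x A (A *ᵥ x), hsymm, smul_eq_mul, sub_nonneg] at this
  exact this

lemma exists_eigenvalues_pos (hA : A.PosSemidef) (h : A ≠ 0) : ∃ i, 0 < hA.1.eigenvalues i := by
  by_contra! hle
  exact h (hA.1.eigenvalues_eq_zero_iff.mp
    (funext fun i => le_antisymm (hle i) (hA.eigenvalues_nonneg i)))

end Matrix.PosSemidef

section Gram

variable {ι E : Type*} [Fintype ι] [NormedAddCommGroup E] [InnerProductSpace ℝ E]

lemma inner_sum_smul_eq_gram_mulVec (v : ι → E) (c : ι → ℝ) (i : ι) :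
    ⟪∑ k, c k • v k, v i⟫ = (gram ℝ v *ᵥ c) i := by
  rw [real_inner_comm, inner_sum]
  simp only [real_inner_smul_right, mulVec, dotProduct, gram_apply, mul_comm]

lemma sum_inner_sq_eq_gram_mulVec_dotProduct (v : ι → E) (c : ι → ℝ) :
    ∑ i, ⟪∑ k, c k • v k, v i⟫ ^ 2 = (gram ℝ v *ᵥ c) ⬝ᵥ (gram ℝ v *ᵥ c) := by
  simp only [inner_sum_smul_eq_gram_mulVec, dotProduct, sq]

lemma norm_sum_smul_sq_eq_dotProduct_gram_mulVec (v : ι → E) (c : ι → ℝ) :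
    ‖∑ k, c k • v k‖ ^ 2 = c ⬝ᵥ gram ℝ v *ᵥ c := by
  rw [← real_inner_self_eq_norm_sq, ← star_dotProduct_gram_mulVec, star_trivial]

lemma exists_norm_eq_one_sum_inner_sq_eq_of_mulVec_eq_smul (v : ι → E) {u : ι → ℝ} {μ : ℝ}
    (hμ : 0 < μ) (hu : u ⬝ᵥ u = 1) (hvu : gram ℝ v *ᵥ u = μ • u) :
    ∃ ζ ∈ Submodule.span ℝ (Set.range v), ‖ζ‖ = 1 ∧ ∑ i, ⟪ζ, v i⟫ ^ 2 = μ := by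
  set c := (√μ)⁻¹ • u
  have hvc : gram ℝ v *ᵥ c = ((√μ)⁻¹ * μ) • u := by rw [mulVec_smul, hvu, smul_smul]
  have hsqrt : (√μ)⁻¹ ^ 2 * μ = 1 := by
    rw [inv_pow, Real.sq_sqrt hμ.le, inv_mul_cancel₀ hμ.ne']
  refine ⟨∑ k, c k • v k, (Submodule.mem_span_range_iff_exists_fun ℝ).mpr ⟨c, rfl⟩, ?_, ?_⟩
  · rw [← pow_eq_one_iff_of_nonneg (norm_nonneg _) two_ne_zero,
      norm_sum_smul_sq_eq_dotProduct_gram_mulVec, hvc]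
    simp only [c, smul_dotProduct, dotProduct_smul, hu, smul_eq_mul]
    linear_combination hsqrt
  · rw [sum_inner_sq_eq_gram_mulVec_dotProduct, hvc]
    simp only [smul_dotProduct, dotProduct_smul, hu, smul_eq_mul]
    linear_combination μ * hsqrt

end Gram

theorem top_eigenvalue_is_max_sum_sq_scores_general
    {E : Type*} [NormedAddCommGroup E] [InnerProductSpace ℝ E]
    (n : ℕ) (v : Fin n → E) (hv : ∃ j, v j ≠ 0)
    (D : Matrix (Fin n) (Fin n) ℝ) (hDdef : ∀ k l, D k l = ⟪v k, v l⟫)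
    (hD : D.IsHermitian) :
    IsGreatest
      {r : ℝ | ∃ ζ : E, ζ ∈ Submodule.span ℝ (Set.range v) ∧ ‖ζ‖ = 1 ∧
        r = ∑ i, ⟪ζ, v i⟫ ^ 2}
      (⨆ k, hD.eigenvalues k) := by
  obtain rfl : D = gram ℝ v := Matrix.ext hDdef
  have hPSD := posSemidef_gram ℝ v
  obtain ⟨j, hj⟩ := hv
  have : Nonempty (Fin n) := ⟨j⟩
  obtain ⟨k₀, hk₀⟩ := Finite.exists_max hD.eigenvalues
  have htop : ⨆ k, hD.eigenvalues k = hD.eigenvalues k₀ :=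
    le_antisymm (ciSup_le hk₀) (le_ciSup (Finite.bddAbove_range _) k₀)
  have hgram_ne : gram ℝ v ≠ 0 := fun h =>
    hj (by simpa [gram_apply] using congrFun (congrFun h j) j)
  obtain ⟨i, hi⟩ := hPSD.exists_eigenvalues_pos hgram_ne
  rw [htop]
  constructor
  · have hu : ⇑(hD.eigenvectorBasis k₀) ⬝ᵥ ⇑(hD.eigenvectorBasis k₀) = 1 := by
      have h := hD.eigenvectorBasis.inner_eq_one k₀
      rwa [EuclideanSpace.inner_eq_star_dotProduct, star_trivial] at h
    obtain ⟨ζ, hζ, hnorm, hsum⟩ := exists_norm_eq_one_sum_inner_sq_eq_of_mulVec_eq_smul v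
      (hi.trans_le (hk₀ i)) hu (hD.mulVec_eigenvectorBasis k₀)
    exact ⟨ζ, hζ, hnorm, hsum.symm⟩
  · rintro r ⟨ζ, hζ, hnorm, rfl⟩
    obtain ⟨c, rfl⟩ := (Submodule.mem_span_range_iff_exists_fun ℝ).mp hζ
    have hc : c ⬝ᵥ gram ℝ v *ᵥ c = 1 := by
      rw [← norm_sum_smul_sq_eq_dotProduct_gram_mulVec, hnorm, one_pow]
    rw [sum_inner_sq_eq_gram_mulVec_dotProduct]
    simpa only [hc, mul_one] using hPSD.mulVec_dotProduct_mulVec_le hk₀ c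

theorem top_eigenvalue_is_max_sum_sq_scores
    {E : Type*} [NormedAddCommGroup E] [InnerProductSpace ℝ E]
    (n : ℕ) (hn : 1 ≤ n) (v : Fin n → E) (hv : ∃ j, v j ≠ 0)
    (D : Matrix (Fin n) (Fin n) ℝ) (hDdef : ∀ k l, D k l = ⟪v k, v l⟫)
    (hD : D.IsHermitian) :
    IsGreatest
      {r : ℝ | ∃ ζ : E, ζ ∈ Submodule.span ℝ (Set.range v) ∧ ‖ζ‖ = 1 ∧
        r = ∑ i, ⟪ζ, v i⟫ ^ 2}
      (⨆ k, hD.eigenvalues k) :=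
  top_eigenvalue_is_max_sum_sq_scores_general n v hv D hDdef hD
end

section
/- Let X and Y be finite multisets of points (b,d) ∈ ℝ × ℝ with b < d for every point. If the rank functions of X and Y agree, i.e., f_X(x,y) = f_Y(x,y) for all (x,y) ∈ ℝ × ℝ with x < y, then X = Y as multisets. -/
/-- The rank function of a persistence diagram given as a finite multiset of
points in `ℝ × ℝ`: the number of points `(b, d)` of `D`, counted with
multiplicity, with `b ≤ x` and `y ≤ d`. -/
noncomputable def diagRank (D : Multiset (ℝ × ℝ)) (x y : ℝ) : ℕ :=
  (D.filter fun p => p.1 ≤ x ∧ y ≤ p.2).card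

/-!
Möbius inversion of the rank function: for `b < d`, choose `x < b` and `y > d` so close to
`b` and `d` that no coordinate of a point of the diagram lies in `(x, b)` or `(d, y)`. Then
`f(x, ·)` and `f(·, y)` count the points with strict inequalities, and by inclusion–exclusion
the multiplicity of `(b, d)` is `f(b, d) - f(x, d) - f(b, y) + f(x, y)`, which only involves
values of the rank function above the diagonal.
-/

theorem Finset.exists_lt_forall_le_iff_lt {α : Type*} [LinearOrder α] [NoMinOrder α]
    (s : Finset α) (b : α) : ∃ x < b, ∀ r ∈ s, r ≤ x ↔ r < b := by
  obtain ⟨c, hc⟩ := exists_lt b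
  set t := insert c (s.filter (· < b))
  have ht : t.Nonempty := Finset.insert_nonempty _ _
  have hmax : t.max' ht < b := (t.max'_lt_iff ht).2 fun r hr => by
    rcases Finset.mem_insert.1 hr with rfl | hr
    · exact hc
    · exact (Finset.mem_filter.1 hr).2
  exact ⟨t.max' ht, hmax, fun r hr => ⟨fun hle => hle.trans_lt hmax,
    fun hlt => t.le_max' r (Finset.mem_insert_of_mem (Finset.mem_filter.2 ⟨hr, hlt⟩))⟩⟩

theorem Finset.exists_gt_forall_le_iff_lt {α : Type*} [LinearOrder α] [NoMaxOrder α]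
    (s : Finset α) (d : α) : ∃ y > d, ∀ r ∈ s, y ≤ r ↔ d < r :=
  Finset.exists_lt_forall_le_iff_lt (α := αᵒᵈ) s d

theorem Multiset.count_add_card_filter_lt_le {α β : Type*} [LinearOrder α] [LinearOrder β]
    (Z : Multiset (α × β)) (b : α) (d : β) :
    Z.count (b, d) + (Z.filter fun p => p.1 < b ∧ d ≤ p.2).card
        + (Z.filter fun p => p.1 ≤ b ∧ d < p.2).card
      = (Z.filter fun p => p.1 ≤ b ∧ d ≤ p.2).card
        + (Z.filter fun p => p.1 < b ∧ d < p.2).card := by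
  induction Z using Multiset.induction with
  | empty => simp
  | cons p Z ih =>
    simp only [Multiset.count_cons, Multiset.filter_cons, Multiset.card_add,
      apply_ite Multiset.card, Multiset.card_singleton, Multiset.card_zero, Prod.ext_iff]
    grind

theorem count_add_diagRank (Z : Multiset (ℝ × ℝ)) {b d x y : ℝ}
    (hx : ∀ p ∈ Z, p.1 ≤ x ↔ p.1 < b) (hy : ∀ p ∈ Z, y ≤ p.2 ↔ d < p.2) :
    Z.count (b, d) + diagRank Z x d + diagRank Z b y = diagRank Z b d + diagRank Z x y := by
  have hxd : diagRank Z x d = (Z.filter fun p => p.1 < b ∧ d ≤ p.2).card :=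
    congrArg _ (Multiset.filter_congr fun p hp => by rw [hx p hp])
  have hby : diagRank Z b y = (Z.filter fun p => p.1 ≤ b ∧ d < p.2).card :=
    congrArg _ (Multiset.filter_congr fun p hp => by rw [hy p hp])
  have hxy : diagRank Z x y = (Z.filter fun p => p.1 < b ∧ d < p.2).card :=
    congrArg _ (Multiset.filter_congr fun p hp => by rw [hx p hp, hy p hp])
  rw [hxd, hby, hxy]
  exact Z.count_add_card_filter_lt_le b d

theorem rank_function_determines_diagram
    (X Y : Multiset (ℝ × ℝ))
    (hX : ∀ p ∈ X, p.1 < p.2) (hY : ∀ p ∈ Y, p.1 < p.2)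
    (h : ∀ x y : ℝ, x < y → diagRank X x y = diagRank Y x y) :
    X = Y := by
  ext ⟨b, d⟩
  by_cases hbd : b < d
  · obtain ⟨x, hxb, hx⟩ := ((X + Y).map Prod.fst).toFinset.exists_lt_forall_le_iff_lt b
    obtain ⟨y, hyd, hy⟩ := ((X + Y).map Prod.snd).toFinset.exists_gt_forall_le_iff_lt d
    have inversion : ∀ Z ≤ X + Y,
        Z.count (b, d) + diagRank Z x d + diagRank Z b y = diagRank Z b d + diagRank Z x y :=
      fun Z hZ => count_add_diagRank Z
        (fun p hp => hx _ <| Multiset.mem_toFinset.2 <|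
          Multiset.mem_map_of_mem _ (Multiset.mem_of_le hZ hp))
        (fun p hp => hy _ <| Multiset.mem_toFinset.2 <|
          Multiset.mem_map_of_mem _ (Multiset.mem_of_le hZ hp))
    have := inversion X (Multiset.le_add_right X Y)
    have := inversion Y (Multiset.le_add_left Y X)
    have := h b d hbd
    have := h x y (hxb.trans (hbd.trans hyd))
    have := h x d (hxb.trans hbd)
    have := h b y (hbd.trans hyd)
    omega
  · rw [Multiset.count_eq_zero_of_notMem fun hm => hbd (hX _ hm),
      Multiset.count_eq_zero_of_notMem fun hm => hbd (hY _ hm)]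
end
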